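/- Accelerated halving of function error: let f be L-smooth and μ-strongly convex in ‖·‖₂ with minimizer x*. Run mirror prox with λ = 1 + √(L/μ) on the Fenchel-game operator g(x,y) = (y, ∇f*(y) - x) with regularizer r(x,y) = (μ/2)‖x‖₂² + f*(y), initialized at z₀ = (x₀, ∇f(x₀)), for T ≥ 4λ iterations. Writing each half-iterate as w_t = (x_{t+1/2}, ∇f(v_{t+1/2})) and setting v̄ = (1/T)Σ_{t<T} v_{t+1/2}, one has f(v̄) - f(x*) ≤ (1/2)(f(x₀) - f(x*)). -/

import Mathlib

/-!
Write `D(x, y) = f x - f y - ⟪∇f y, x - y⟫` for the Bregman divergence of `f`. The iteration is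
mirror prox on the Fenchel game `g(x, y) = (y, ∇f*(y) - x)` with regularizer
`r(x, y) = μ/2‖x‖² + f*(y)`, written in primal coordinates `y = ∇f v`, where the divergence of `r`
becomes `μ/2‖x' - x‖² + D(v, v')`. Cocoercivity of `∇f` and Young's inequality make `g`
`(1 + √(L/μ))`-relatively Lipschitz with respect to `r`, so the mirror-prox regret against
`u = (x*, x*)` is at most `λ V_{z₀}(u) ≤ 2λ (f x₀ - f x*)`. Each regret term dominates
`f(v_{t+1/2}) - f x*`, and Jensen's inequality turns the sum into `T (f v̄ - f x*)`;
`T ≥ 4λ` gives the halving.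
-/

open scoped RealInnerProductSpace

lemma ConvexOn.map_inv_card_smul_sum_le {E ι : Type*} [AddCommGroup E] [Module ℝ E]
    {f : E → ℝ} (hf : ConvexOn ℝ Set.univ f) {s : Finset ι} (hs : s.Nonempty) (p : ι → E) :
    f ((s.card : ℝ)⁻¹ • ∑ i ∈ s, p i) ≤ (s.card : ℝ)⁻¹ * ∑ i ∈ s, f (p i) := by
  have h := hf.map_centerMass_le (t := s) (w := fun _ => (1 : ℝ)) (p := p)
    (fun _ _ => zero_le_one) (by simpa using hs) (fun _ _ => Set.mem_univ _)
  simpa [Finset.centerMass] using h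

lemma inner_le_div_add_mul {E : Type*} [NormedAddCommGroup E] [InnerProductSpace ℝ E]
    {c : ℝ} (hc : 0 < c) (u v : E) :
    ⟪u, v⟫ ≤ ‖u‖ ^ 2 / (2 * c) + c / 2 * ‖v‖ ^ 2 := by
  have h : 0 ≤ ‖u - c • v‖ ^ 2 := sq_nonneg _
  rw [norm_sub_sq_real, real_inner_smul_right, norm_smul, Real.norm_of_nonneg hc.le] at h
  rw [div_add' _ _ _ (by positivity), le_div_iff₀ (by positivity)]
  linarith

section Bregman

variable {E : Type*} [NormedAddCommGroup E] [InnerProductSpace ℝ E] (f : E → ℝ) (f' : E → E)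

def bregmanDiv (x y : E) : ℝ := f x - f y - ⟪f' y, x - y⟫

variable {f f'}

lemma bregmanDiv_nonneg (hconv : ∀ x y, f x + ⟪f' x, y - x⟫ ≤ f y) (x y : E) :
    0 ≤ bregmanDiv f f' x y := by
  have := hconv y x
  unfold bregmanDiv
  linarith

lemma bregmanDiv_three_point (x x' y : E) :
    bregmanDiv f f' x y - bregmanDiv f f' x' y - bregmanDiv f f' x x' =
      ⟪f' x' - f' y, x - x'⟫ := by
  simp only [bregmanDiv, inner_sub_left, inner_sub_right]
  ring

lemma convexOn_univ_of_le_add_inner (hconv : ∀ x y, f x + ⟪f' x, y - x⟫ ≤ f y) :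
    ConvexOn ℝ Set.univ f := by
  refine ⟨convex_univ, fun x _ y _ a b ha hb hab => ?_⟩
  set z := a • x + b • y
  have hx := hconv z x
  have hy := hconv z y
  have hz : a * ⟪f' z, x - z⟫ + b * ⟪f' z, y - z⟫ = 0 := by
    rw [← real_inner_smul_right, ← real_inner_smul_right, ← inner_add_right, smul_sub, smul_sub,
      sub_add_sub_comm, ← add_smul, hab, one_smul, sub_self, inner_zero_right]
  calc f z = a * (f z + ⟪f' z, x - z⟫) + b * (f z + ⟪f' z, y - z⟫) := by
        linear_combination (-f z) * hab - hz
    _ ≤ a • f x + b • f y :=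
        add_le_add (mul_le_mul_of_nonneg_left hx ha) (mul_le_mul_of_nonneg_left hy hb)

/-- Cocoercivity of the gradient of a convex `L`-smooth function. -/
lemma norm_sub_sq_le_bregmanDiv {L : ℝ} (hL : 0 < L)
    (hsmooth : ∀ x y, f y ≤ f x + ⟪f' x, y - x⟫ + L / 2 * ‖y - x‖ ^ 2)
    (hconv : ∀ x y, f x + ⟪f' x, y - x⟫ ≤ f y) (x y : E) :
    ‖f' x - f' y‖ ^ 2 ≤ 2 * L * bregmanDiv f f' x y := by
  set Δ := f' x - f' y
  -- compare the smoothness upper bound at `x` with the tangent lower bound at `y`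
  -- at the gradient step `x - Δ / L`
  have hup := hsmooth x (x - L⁻¹ • Δ)
  have hlow := hconv y (x - L⁻¹ • Δ)
  rw [sub_sub_cancel_left, inner_neg_right, norm_neg, norm_smul,
    Real.norm_of_nonneg (by positivity), real_inner_smul_right] at hup
  rw [sub_right_comm, inner_sub_right, real_inner_smul_right] at hlow
  have hΔ : ⟪f' x, Δ⟫ - ⟪f' y, Δ⟫ = ‖Δ‖ ^ 2 := by
    rw [← inner_sub_left, real_inner_self_eq_norm_sq]
  unfold bregmanDiv
  field_simp at hup hlow ⊢
  linarith

lemma inner_sub_le_bregmanDiv {μ L : ℝ} (hμ : 0 < μ) (hL : 0 < L)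
    (hsmooth : ∀ x y, f y ≤ f x + ⟪f' x, y - x⟫ + L / 2 * ‖y - x‖ ^ 2)
    (hconv : ∀ x y, f x + ⟪f' x, y - x⟫ ≤ f y) (x y v : E) :
    ⟪f' x - f' y, v⟫ ≤ √(L / μ) * (bregmanDiv f f' x y + μ / 2 * ‖v‖ ^ 2) := by
  set s := √(L / μ)
  have hs : 0 < s := by positivity
  have hL_eq : L = s ^ 2 * μ := by
    rw [Real.sq_sqrt (by positivity)]
    field_simp
  have hcoco := norm_sub_sq_le_bregmanDiv hL hsmooth hconv x y
  rw [hL_eq] at hcoco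
  calc ⟪f' x - f' y, v⟫ ≤ ‖f' x - f' y‖ ^ 2 / (2 * (s * μ)) + s * μ / 2 * ‖v‖ ^ 2 :=
        inner_le_div_add_mul (by positivity) _ _
    _ ≤ 2 * (s ^ 2 * μ) * bregmanDiv f f' x y / (2 * (s * μ)) + s * μ / 2 * ‖v‖ ^ 2 := by
        gcongr
    _ = s * (bregmanDiv f f' x y + μ / 2 * ‖v‖ ^ 2) := by
        field_simp

end Bregman

/-! A pair `(x, v) : E × E` stands for the point `(x, ∇f v)` of the Fenchel game, so that
`g(x, ∇f v) = (∇f v, v - x)` and the divergence of `r(x, y) = μ/2‖x‖² + f*(y)` from `(x, ∇f v)` to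
`(x', ∇f v')` is `μ/2‖x' - x‖² + D_f(v, v')`. -/

namespace FenchelGame

variable {E : Type*} [NormedAddCommGroup E] [InnerProductSpace ℝ E]
  (f : E → ℝ) (f' : E → E) (μ : ℝ)

noncomputable def divergence (z z' : E × E) : ℝ :=
  μ / 2 * ‖z'.1 - z.1‖ ^ 2 + bregmanDiv f f' z.2 z'.2

/-- `pairing f' z w u = ⟪g z, w - u⟫`. -/
def pairing (z w u : E × E) : ℝ := ⟪f' z.2, w.1 - u.1⟫ + ⟪z.2 - z.1, f' w.2 - f' u.2⟫

/-- The minimizer of `⟪g w, ·⟫ + lam • divergence z ·`. -/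
noncomputable def proxStep (lam : ℝ) (z w : E × E) : E × E :=
  (z.1 - (1 / (μ * lam)) • f' w.2, z.2 + (1 / lam) • (w.1 - w.2))

def RelativelyLipschitz (lam : ℝ) : Prop :=
  ∀ z w z' : E × E, pairing f' w w z' - pairing f' z w z' ≤
    lam * (divergence f f' μ z w + divergence f f' μ w z')

variable {f f' μ}

lemma divergence_nonneg (hμ : 0 ≤ μ) (hconv : ∀ x y, f x + ⟪f' x, y - x⟫ ≤ f y)
    (z z' : E × E) : 0 ≤ divergence f f' μ z z' :=
  add_nonneg (by positivity) (bregmanDiv_nonneg hconv _ _)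

lemma pairing_add (z w z' u : E × E) :
    pairing f' z w u = pairing f' z w z' + pairing f' z z' u := by
  simp only [pairing, inner_sub_right]
  ring

lemma pairing_proxStep {lam : ℝ} (hμ : μ ≠ 0) (hlam : lam ≠ 0) (z w u : E × E) :
    pairing f' w (proxStep f' μ lam z w) u =
      lam * (divergence f f' μ z u - divergence f f' μ (proxStep f' μ lam z w) u
        - divergence f f' μ z (proxStep f' μ lam z w)) := by
  set z' := proxStep f' μ lam z w
  have hgrad : f' w.2 = (μ * lam) • (z.1 - z'.1) := by
    simp only [z', proxStep, sub_sub_cancel, smul_smul]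
    field_simp
    simp
  have hdual : w.2 - w.1 = lam • (z.2 - z'.2) := by
    simp only [z', proxStep, sub_add_cancel_left, smul_neg, smul_smul]
    field_simp
    simp
  have hprimal : ‖u.1 - z.1‖ ^ 2 =
      ‖z'.1 - z.1‖ ^ 2 + 2 * ⟪z.1 - z'.1, z'.1 - u.1⟫ + ‖u.1 - z'.1‖ ^ 2 := by
    rw [norm_sub_rev u.1, norm_sub_rev z'.1 z.1, norm_sub_rev u.1, ← norm_add_sq_real,
      sub_add_sub_cancel]
  have hbregman := bregmanDiv_three_point (f := f) (f' := f') z.2 z'.2 u.2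
  rw [real_inner_comm] at hbregman
  simp only [divergence, pairing, hgrad, hdual, real_inner_smul_left]
  rw [hprimal]
  linear_combination (-lam) * hbregman

lemma relativelyLipschitz_one_add_sqrt {L : ℝ} (hμ : 0 < μ) (hL : 0 < L)
    (hsmooth : ∀ x y, f y ≤ f x + ⟪f' x, y - x⟫ + L / 2 * ‖y - x‖ ^ 2)
    (hconv : ∀ x y, f x + ⟪f' x, y - x⟫ ≤ f y) :
    RelativelyLipschitz f f' μ (1 + √(L / μ)) := by
  rintro ⟨a, p⟩ ⟨b, q⟩ ⟨a', p'⟩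
  have hx := inner_sub_le_bregmanDiv hμ hL hsmooth hconv p q (a' - b)
  have hy := inner_sub_le_bregmanDiv hμ hL hsmooth hconv q p' (a - b)
  have hcross := bregmanDiv_three_point (f := f) (f' := f') p q p'
  have hpp' := bregmanDiv_nonneg hconv p p'
  have hs : 0 ≤ √(L / μ) := Real.sqrt_nonneg _
  have hab : 0 ≤ μ / 2 * ‖b - a‖ ^ 2 := by positivity
  have ha'b : 0 ≤ μ / 2 * ‖a' - b‖ ^ 2 := by positivity
  rw [norm_sub_rev] at hy
  simp only [pairing, divergence, inner_sub_left, inner_sub_right, real_inner_comm (f' _)]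
    at hx hy hcross ⊢
  linarith

lemma pairing_le_of_relativelyLipschitz {lam : ℝ} (hμ : μ ≠ 0) (hlam : lam ≠ 0)
    (hrel : RelativelyLipschitz f f' μ lam) {z w z' : E × E} (hw : w = proxStep f' μ lam z z)
    (hz' : z' = proxStep f' μ lam z w) (u : E × E) :
    pairing f' w w u ≤ lam * (divergence f f' μ z u - divergence f f' μ z' u) := by
  have hextra := pairing_proxStep (f := f) (f' := f') hμ hlam z w u
  have hhalf := pairing_proxStep (f := f) (f' := f') hμ hlam z z z'
  rw [← hz'] at hextra
  rw [← hw] at hhalf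
  rw [pairing_add w w z' u]
  linear_combination hextra + hhalf + hrel z w z'

lemma sum_pairing_le {lam : ℝ} (hμ : 0 < μ) (hlam : 0 < lam)
    (hconv : ∀ x y, f x + ⟪f' x, y - x⟫ ≤ f y) (hrel : RelativelyLipschitz f f' μ lam)
    {z w : ℕ → E × E} (hw : ∀ t, w t = proxStep f' μ lam (z t) (z t))
    (hz : ∀ t, z (t + 1) = proxStep f' μ lam (z t) (w t)) (u : E × E) (T : ℕ) :
    ∑ t ∈ Finset.range T, pairing f' (w t) (w t) u ≤ lam * divergence f f' μ (z 0) u :=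
  calc ∑ t ∈ Finset.range T, pairing f' (w t) (w t) u
      ≤ ∑ t ∈ Finset.range T,
          lam * (divergence f f' μ (z t) u - divergence f f' μ (z (t + 1)) u) :=
        Finset.sum_le_sum fun t _ =>
          pairing_le_of_relativelyLipschitz hμ.ne' hlam.ne' hrel (hw t) (hz t) u
    _ = lam * (divergence f f' μ (z 0) u - divergence f f' μ (z T) u) := by
        rw [← Finset.mul_sum, Finset.sum_range_sub']
    _ ≤ lam * divergence f f' μ (z 0) u := by
        gcongr
        exact sub_le_self _ (divergence_nonneg hμ.le hconv _ _)

lemma sub_le_pairing (hconv : ∀ x y, f x + ⟪f' x, y - x⟫ ≤ f y) {xs : E} (hxs : f' xs = 0)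
    (w : E × E) : f w.2 - f xs ≤ pairing f' w w (xs, xs) := by
  have := hconv w.2 xs
  simp only [pairing, hxs, sub_zero, inner_sub_right, real_inner_comm (f' _)] at this ⊢
  linarith

lemma divergence_le_two_mul_sub
    (hsc : ∀ x y, f x + ⟪f' x, y - x⟫ + μ / 2 * ‖y - x‖ ^ 2 ≤ f y) {xs : E} (hxs : f' xs = 0)
    (x₀ : E) : divergence f f' μ (x₀, x₀) (xs, xs) ≤ 2 * (f x₀ - f xs) := by
  have := hsc xs x₀
  simp only [divergence, bregmanDiv, hxs, inner_zero_left, add_zero, sub_zero] at this ⊢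
  rw [norm_sub_rev]
  linarith

end FenchelGame

open FenchelGame

theorem accelerated_halving_general {d : ℕ}
    (f : EuclideanSpace ℝ (Fin d) → ℝ)
    (f' : EuclideanSpace ℝ (Fin d) → EuclideanSpace ℝ (Fin d))
    (μ L : ℝ) (hμ : 0 < μ) (hμL : μ ≤ L)
    (hsmooth : ∀ x y, f y ≤ f x + ⟪f' x, y - x⟫ + L / 2 * ‖y - x‖ ^ 2)
    (hsc : ∀ x y, f x + ⟪f' x, y - x⟫ + μ / 2 * ‖y - x‖ ^ 2 ≤ f y)
    (xs : EuclideanSpace ℝ (Fin d)) (hmin : ∀ x, f xs ≤ f x) (hgrad0 : f' xs = 0)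
    (lam : ℝ) (hlamdef : lam = 1 + Real.sqrt (L / μ))
    (x₀ : EuclideanSpace ℝ (Fin d))
    (x v xh vh : ℕ → EuclideanSpace ℝ (Fin d))
    (hx0 : x 0 = x₀) (hv0 : v 0 = x₀)
    (hxh : ∀ t, xh t = x t - (1 / (μ * lam)) • f' (v t))
    (hvh : ∀ t, vh t = v t + (1 / lam) • (x t - v t))
    (hx : ∀ t, x (t + 1) = x t - (1 / (μ * lam)) • f' (vh t))
    (hv : ∀ t, v (t + 1) = v t + (1 / lam) • (xh t - vh t))
    (T : ℕ) (hT : 4 * lam ≤ (T : ℝ)) :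
    f ((T : ℝ)⁻¹ • ∑ t ∈ Finset.range T, vh t) - f xs ≤ (1 / 2) * (f x₀ - f xs) := by
  have hconv : ∀ x y, f x + ⟪f' x, y - x⟫ ≤ f y := fun x y =>
    (le_add_of_nonneg_right (by positivity)).trans (hsc x y)
  have hlam : 0 < lam := hlamdef ▸ by positivity
  have hT0 : (0 : ℝ) < T := by linarith
  have hrel : RelativelyLipschitz f f' μ lam :=
    hlamdef ▸ relativelyLipschitz_one_add_sqrt hμ (hμ.trans_le hμL) hsmooth hconv
  have hregret := sum_pairing_le (z := fun t => (x t, v t)) (w := fun t => (xh t, vh t)) hμ hlam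
    hconv hrel (fun t => Prod.ext (hxh t) (hvh t)) (fun t => Prod.ext (hx t) (hv t)) (xs, xs) T
  rw [hx0, hv0] at hregret
  have hjensen := (convexOn_univ_of_le_add_inner hconv).map_inv_card_smul_sum_le
    (Finset.nonempty_range_iff.2 (by exact_mod_cast hT0.ne')) vh
  rw [Finset.card_range] at hjensen
  calc f ((T : ℝ)⁻¹ • ∑ t ∈ Finset.range T, vh t) - f xs
      ≤ (T : ℝ)⁻¹ * ∑ t ∈ Finset.range T, (f (vh t) - f xs) := by
        rw [Finset.sum_sub_distrib, Finset.sum_const, Finset.card_range, nsmul_eq_mul, mul_sub,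
          inv_mul_cancel_left₀ hT0.ne']
        linarith
    _ ≤ (T : ℝ)⁻¹ * ∑ t ∈ Finset.range T, pairing f' (xh t, vh t) (xh t, vh t) (xs, xs) := by
        gcongr with t
        exact sub_le_pairing hconv hgrad0 (xh t, vh t)
    _ ≤ (T : ℝ)⁻¹ * (lam * (2 * (f x₀ - f xs))) := by
        gcongr
        exact hregret.trans (by gcongr; exact divergence_le_two_mul_sub hsc hgrad0 x₀)
    _ ≤ 1 / 2 * (f x₀ - f xs) := by
        rw [inv_mul_le_iff₀ hT0]
        nlinarith [hmin x₀]

/-- Accelerated halving of function error (Theorem 1): for `f` `L`-smooth and `μ`-strongly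
convex with minimizer `x*`, running mirror prox with `λ = 1 + √(L/μ)` on the Fenchel game for
`T ≥ 4λ` iterations — whose iterates admit the closed form of Algorithm 2 — the average
`v̄ = (1/T)∑_{t<T} v_{t+1/2}` satisfies `f(v̄) - f(x*) ≤ (1/2)(f(x₀) - f(x*))`. -/
theorem accelerated_halving {d : ℕ}
    (f : EuclideanSpace ℝ (Fin d) → ℝ)
    (f' : EuclideanSpace ℝ (Fin d) → EuclideanSpace ℝ (Fin d))
    (μ L : ℝ) (hμ : 0 < μ) (hμL : μ ≤ L)
    (hdiff : ∀ x, HasGradientAt f (f' x) x)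
    (hsmooth : ∀ x y, f y ≤ f x + ⟪f' x, y - x⟫ + L / 2 * ‖y - x‖ ^ 2)
    (hsc : ∀ x y, f x + ⟪f' x, y - x⟫ + μ / 2 * ‖y - x‖ ^ 2 ≤ f y)
    (xs : EuclideanSpace ℝ (Fin d)) (hmin : ∀ x, f xs ≤ f x) (hgrad0 : f' xs = 0)
    (lam : ℝ) (hlamdef : lam = 1 + Real.sqrt (L / μ))
    (x₀ : EuclideanSpace ℝ (Fin d))
    (x v xh vh : ℕ → EuclideanSpace ℝ (Fin d))
    (hx0 : x 0 = x₀) (hv0 : v 0 = x₀)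
    (hxh : ∀ t, xh t = x t - (1 / (μ * lam)) • f' (v t))
    (hvh : ∀ t, vh t = v t + (1 / lam) • (x t - v t))
    (hx : ∀ t, x (t + 1) = x t - (1 / (μ * lam)) • f' (vh t))
    (hv : ∀ t, v (t + 1) = v t + (1 / lam) • (xh t - vh t))
    (T : ℕ) (hT : 4 * lam ≤ (T : ℝ)) :
    f ((T : ℝ)⁻¹ • ∑ t ∈ Finset.range T, vh t) - f xs ≤ (1 / 2) * (f x₀ - f xs) :=
  accelerated_halving_general f f' μ L hμ hμL hsmooth hsc xs hmin hgrad0 lam hlamdef x₀ x v xh vh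
    hx0 hv0 hxh hvh hx hv T hT
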